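/- arXiv:0902.3370 — 5 statements merged into one kernel-verified Lean document; each statement's English description precedes it below -/
import Mathlib

section
/- Generalized Gaussian elimination for cochain complexes: Let R be a ring and, for each i ∈ ℤ, let A i and B i be R-modules with R-linear maps a i : A i → A (i+1), b i : B i → B (i+1), c i : A i → B (i+1), d i : B i → A (i+1) such that the maps δ i : A i × B i → A (i+1) × B (i+1) defined by δ i (x, y) = (a i x + d i y, c i x + b i y) satisfy δ (i+1) ∘ δ i = 0. Suppose moreover that b (i+1) ∘ b i = 0 for all i and that there are R-linear maps h i : B i → B (i-1) with h (i+1) ∘ b i + b (i-1) ∘ h i = -id on B i for all i (i.e. (B, b) is null-homotopic). Then the maps a' i := a i + d i ∘ h (i+1) ∘ c i satisfy a' (i+1) ∘ a' i = 0, and the resulting cochain complex (A, a') is homotopy equivalent to (A × B, δ): there exist R-linear maps f i : A i × B i → A i and g i : A i → A i × B i with f (i+1) ∘ δ i = a' i ∘ f i and δ i ∘ g i = g (i+1) ∘ a' i, together with R-linear maps H i : A i × B i → A (i-1) × B (i-1) and H' i : A i → A (i-1) such that g i ∘ f i - id = H (i+1) ∘ δ i + δ (i-1) ∘ H i and f i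 ∘ g i - id = H' (i+1) ∘ a' i + a' (i-1) ∘ H' i. -/
/-!
Write `δ` as the block matrix `[[a, d], [c, b]]`. Then `δ² = 0` says `aa = -dc`, `ca = -bc`,
`ad = -db` and `cd = -bb = 0`. Using the contraction `hb + bh = -1` of `(B, b)`, the projection
`f (x, y) = x + dh y` and the inclusion `g x = (x, hc x)` are chain maps for `a' = a + dhc`;
`gf - 1` is the boundary of `H (x, y) = (0, h y)` (this needs `cd = 0`), and `fg - 1 = dhhc` is the
boundary of `H' = dhhhc`.
-/

namespace Int

/-- On `ℤ`, `i - 1 + 1 = i` holds only propositionally, so a family given in degrees `j + 1`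
is transported to all degrees. -/
def ofSuccFamily {F : ℤ → Sort*} (φ : ∀ j, F (j + 1)) (i : ℤ) : F i :=
  Int.sub_add_cancel i 1 ▸ φ (i - 1)

@[simp]
theorem ofSuccFamily_succ {F : ℤ → Sort*} (φ : ∀ j, F (j + 1)) (j : ℤ) :
    ofSuccFamily φ (j + 1) = φ j := by
  suffices ∀ k (e : k + 1 = j + 1), (e ▸ φ k : F (j + 1)) = φ j from this _ _
  rintro k e
  obtain rfl : k = j := by omega
  rfl

end Int

namespace GaussianElimination

variable {R : Type*} [Ring R] {A B : ℤ → Type*}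
  [∀ i, AddCommGroup (A i)] [∀ i, AddCommGroup (B i)]
  [∀ i, Module R (A i)] [∀ i, Module R (B i)]
  (a : ∀ i, A i →ₗ[R] A (i + 1)) (b : ∀ i, B i →ₗ[R] B (i + 1))
  (c : ∀ i, A i →ₗ[R] B (i + 1)) (d : ∀ i, B i →ₗ[R] A (i + 1))
  (h : ∀ i, B (i + 1) →ₗ[R] B i)

def totalDiff (i : ℤ) : A i × B i →ₗ[R] A (i + 1) × B (i + 1) :=
  ((a i).coprod (d i)).prod ((c i).coprod (b i))

def reducedDiff (i : ℤ) : A i →ₗ[R] A (i + 1) := a i + d i ∘ₗ h i ∘ₗ c i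

def zigzag : ∀ i, B i →ₗ[R] A i := Int.ofSuccFamily fun j ↦ d j ∘ₗ h j

def proj (i : ℤ) : A i × B i →ₗ[R] A i :=
  LinearMap.fst R (A i) (B i) + zigzag d h i ∘ₗ LinearMap.snd R (A i) (B i)

def incl (i : ℤ) : A i →ₗ[R] A i × B i := LinearMap.id.prod (h i ∘ₗ c i)

def totalHomotopy (i : ℤ) : A (i + 1) × B (i + 1) →ₗ[R] A i × B i :=
  (0 : A (i + 1) × B (i + 1) →ₗ[R] A i).prod (h i ∘ₗ LinearMap.snd R (A (i + 1)) (B (i + 1)))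

def reducedHomotopy (i : ℤ) : A (i + 1) →ₗ[R] A i :=
  zigzag d h i ∘ₗ h i ∘ₗ h (i + 1) ∘ₗ c (i + 1)

@[simp]
theorem zigzag_succ (i : ℤ) : zigzag d h (i + 1) = d i ∘ₗ h i :=
  Int.ofSuccFamily_succ _ i

theorem totalDiff_apply (i : ℤ) (x : A i) (y : B i) :
    totalDiff a b c d i (x, y) = (a i x + d i y, c i x + b i y) := rfl

theorem proj_apply (i : ℤ) (x : A i) (y : B i) : proj d h i (x, y) = x + zigzag d h i y := rfl

theorem incl_apply (i : ℤ) (x : A i) : incl c h i x = (x, h i (c i x)) := rfl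

theorem totalHomotopy_apply (i : ℤ) (x : A (i + 1)) (y : B (i + 1)) :
    totalHomotopy h i (x, y) = (0, h i y) := rfl

variable {a b c d h}

theorem block_relations (hδδ : ∀ i, totalDiff a b c d (i + 1) ∘ₗ totalDiff a b c d i = 0)
    (hbb : ∀ i, b (i + 1) ∘ₗ b i = 0) :
    (∀ i x, a (i + 1) (a i x) = -d (i + 1) (c i x)) ∧
    (∀ i x, c (i + 1) (a i x) = -b (i + 1) (c i x)) ∧
    (∀ i y, a (i + 1) (d i y) = -d (i + 1) (b i y)) ∧
    (∀ i y, c (i + 1) (d i y) = 0) := by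
  have hδδ' (i : ℤ) (x : A i) (y : B i) :
      a (i + 1) (a i x + d i y) + d (i + 1) (c i x + b i y) = 0 ∧
      c (i + 1) (a i x + d i y) + b (i + 1) (c i x + b i y) = 0 := by
    simpa [totalDiff, Prod.ext_iff] using congr($(hδδ i) (x, y))
  refine ⟨fun i x ↦ ?_, fun i x ↦ ?_, fun i y ↦ ?_, fun i y ↦ ?_⟩
  · simpa [eq_neg_iff_add_eq_zero] using (hδδ' i x 0).1
  · simpa [eq_neg_iff_add_eq_zero] using (hδδ' i x 0).2
  · simpa [eq_neg_iff_add_eq_zero] using (hδδ' i 0 y).1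
  · have hb : b (i + 1) (b i y) = 0 := congr($(hbb i) y)
    simpa [hb] using (hδδ' i 0 y).2

theorem h_comp_b_apply {i : ℤ} (hhb : h (i + 1) ∘ₗ b (i + 1) + b i ∘ₗ h i = -LinearMap.id)
    (y : B (i + 1)) : h (i + 1) (b (i + 1) y) = -y - b i (h i y) := by
  rw [eq_sub_iff_add_eq, ← LinearMap.comp_apply, ← LinearMap.comp_apply, ← LinearMap.add_apply,
    hhb, LinearMap.neg_apply, LinearMap.id_apply]

theorem reducedDiff_comp_reducedDiff
    (haa : ∀ i x, a (i + 1) (a i x) = -d (i + 1) (c i x))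
    (hca : ∀ i x, c (i + 1) (a i x) = -b (i + 1) (c i x))
    (had : ∀ i y, a (i + 1) (d i y) = -d (i + 1) (b i y))
    (hcd : ∀ i y, c (i + 1) (d i y) = 0)
    (hhb : ∀ i y, h (i + 1) (b (i + 1) y) = -y - b i (h i y)) (i : ℤ) :
    reducedDiff a c d h (i + 1) ∘ₗ reducedDiff a c d h i = 0 := by
  ext x
  simp only [reducedDiff, LinearMap.comp_apply, LinearMap.add_apply, LinearMap.zero_apply,
    map_add, haa, hca, had, hcd, map_neg, map_zero, hhb, map_sub, add_zero]
  abel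

theorem proj_comp_totalDiff
    (had : ∀ i y, a (i + 1) (d i y) = -d (i + 1) (b i y))
    (hcd : ∀ i y, c (i + 1) (d i y) = 0)
    (hhb : ∀ i y, h (i + 1) (b (i + 1) y) = -y - b i (h i y)) (i : ℤ) :
    proj d h (i + 1) ∘ₗ totalDiff a b c d i = reducedDiff a c d h i ∘ₗ proj d h i := by
  obtain ⟨j, rfl⟩ : ∃ j, j + 1 = i := ⟨i - 1, by omega⟩
  refine LinearMap.ext fun ⟨x, y⟩ ↦ ?_
  simp only [LinearMap.comp_apply, totalDiff_apply, proj_apply, reducedDiff, zigzag_succ,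
    LinearMap.add_apply, map_add, had, hcd, map_neg, map_zero, hhb, map_sub, add_zero]
  abel

theorem totalDiff_comp_incl
    (hca : ∀ i x, c (i + 1) (a i x) = -b (i + 1) (c i x))
    (hcd : ∀ i y, c (i + 1) (d i y) = 0)
    (hhb : ∀ i y, h (i + 1) (b (i + 1) y) = -y - b i (h i y)) (i : ℤ) :
    totalDiff a b c d i ∘ₗ incl c h i = incl c h (i + 1) ∘ₗ reducedDiff a c d h i := by
  refine LinearMap.ext fun x ↦ Prod.ext rfl ?_
  simp only [LinearMap.comp_apply, incl_apply, totalDiff_apply, reducedDiff, LinearMap.add_apply,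
    Prod.snd_add, map_add, hca, hcd, map_neg, map_zero, hhb, add_zero]
  abel

theorem incl_comp_proj_sub_id
    (hcd : ∀ i y, c (i + 1) (d i y) = 0)
    (hhb : ∀ i y, h (i + 1) (b (i + 1) y) = -y - b i (h i y)) (i : ℤ) :
    incl c h (i + 1) ∘ₗ proj d h (i + 1) - LinearMap.id =
      totalHomotopy h (i + 1) ∘ₗ totalDiff a b c d (i + 1) +
        totalDiff a b c d i ∘ₗ totalHomotopy h i := by
  refine LinearMap.ext fun ⟨x, y⟩ ↦ Prod.ext ?_ ?_
  all_goals simp only [LinearMap.sub_apply, LinearMap.add_apply, LinearMap.comp_apply,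
    LinearMap.id_apply, proj_apply, incl_apply, totalDiff_apply, totalHomotopy_apply, zigzag_succ,
    map_add, hcd, map_zero, add_zero, hhb, Prod.fst_add, Prod.snd_add, Prod.fst_sub, Prod.snd_sub]
  all_goals abel

theorem proj_comp_incl_sub_id
    (hca : ∀ i x, c (i + 1) (a i x) = -b (i + 1) (c i x))
    (had : ∀ i y, a (i + 1) (d i y) = -d (i + 1) (b i y))
    (hcd : ∀ i y, c (i + 1) (d i y) = 0)
    (hhb : ∀ i y, h (i + 1) (b (i + 1) y) = -y - b i (h i y)) (i : ℤ) :
    proj d h (i + 1) ∘ₗ incl c h (i + 1) - LinearMap.id =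
      reducedHomotopy c d h (i + 1) ∘ₗ reducedDiff a c d h (i + 1) +
        reducedDiff a c d h i ∘ₗ reducedHomotopy c d h i := by
  obtain ⟨j, rfl⟩ : ∃ j, j + 1 = i := ⟨i - 1, by omega⟩
  ext x
  simp only [LinearMap.sub_apply, LinearMap.add_apply, LinearMap.comp_apply, LinearMap.id_apply,
    incl_apply, proj_apply, reducedDiff, reducedHomotopy, zigzag_succ, map_add, hca, had, hcd,
    map_neg, map_zero, hhb, map_sub, add_zero]
  abel

end GaussianElimination

/-- Generalized Gaussian elimination for cochain complexes of `R`-modules indexed by `ℤ`.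
Here `a i : A i →ₗ A (i+1)`, `b i : B i →ₗ B (i+1)`, `c i : A i →ₗ B (i+1)`,
`d i : B i →ₗ A (i+1)` and `δ i (x, y) = (a i x + d i y, c i x + b i y)` with
`δ ∘ δ = 0` and `b ∘ b = 0`.  The degree `-1` maps `h` (with `h i : B (i+1) →ₗ B i`
playing the role of the map `B (i+1) → B i` of the informal statement) give a
null-homotopy of `(B, b)`:  `h ∘ b + b ∘ h = -id` in every degree.  Then the reduced
differential `a' i = a i + d i ∘ h i ∘ c i` squares to zero and `(A, a')` is homotopy
equivalent to `(A × B, δ)` via chain maps `f`, `g` and homotopies `H`, `H'`. -/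
theorem gaussian_elimination_cochain_complexes
    {R : Type*} [Ring R] {A B : ℤ → Type*}
    [∀ i, AddCommGroup (A i)] [∀ i, AddCommGroup (B i)]
    [∀ i, Module R (A i)] [∀ i, Module R (B i)]
    (a : ∀ i, A i →ₗ[R] A (i + 1)) (b : ∀ i, B i →ₗ[R] B (i + 1))
    (c : ∀ i, A i →ₗ[R] B (i + 1)) (d : ∀ i, B i →ₗ[R] A (i + 1))
    (δ : ∀ i, (A i × B i) →ₗ[R] (A (i + 1) × B (i + 1)))
    (hδ : ∀ (i : ℤ) (x : A i) (y : B i), δ i (x, y) = (a i x + d i y, c i x + b i y))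
    (hδδ : ∀ i : ℤ, δ (i + 1) ∘ₗ δ i = 0)
    (hbb : ∀ i : ℤ, b (i + 1) ∘ₗ b i = 0)
    (h : ∀ i, B (i + 1) →ₗ[R] B i)
    (hhb : ∀ i : ℤ, h (i + 1) ∘ₗ b (i + 1) + b i ∘ₗ h i =
      -(LinearMap.id : B (i + 1) →ₗ[R] B (i + 1))) :
    (∀ i : ℤ,
      (a (i + 1) + d (i + 1) ∘ₗ h (i + 1) ∘ₗ c (i + 1)) ∘ₗ (a i + d i ∘ₗ h i ∘ₗ c i) = 0) ∧
    ∃ (f : ∀ i, (A i × B i) →ₗ[R] A i) (g : ∀ i, A i →ₗ[R] (A i × B i))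
      (H : ∀ i, (A (i + 1) × B (i + 1)) →ₗ[R] (A i × B i)) (H' : ∀ i, A (i + 1) →ₗ[R] A i),
      (∀ i : ℤ, f (i + 1) ∘ₗ δ i = (a i + d i ∘ₗ h i ∘ₗ c i) ∘ₗ f i) ∧
      (∀ i : ℤ, δ i ∘ₗ g i = g (i + 1) ∘ₗ (a i + d i ∘ₗ h i ∘ₗ c i)) ∧
      (∀ i : ℤ, g (i + 1) ∘ₗ f (i + 1) - LinearMap.id = H (i + 1) ∘ₗ δ (i + 1) + δ i ∘ₗ H i) ∧
      (∀ i : ℤ, f (i + 1) ∘ₗ g (i + 1) - LinearMap.id =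
        H' (i + 1) ∘ₗ (a (i + 1) + d (i + 1) ∘ₗ h (i + 1) ∘ₗ c (i + 1)) +
          (a i + d i ∘ₗ h i ∘ₗ c i) ∘ₗ H' i) := by
  open GaussianElimination in
  obtain rfl : δ = totalDiff a b c d := funext fun i ↦ LinearMap.ext fun p ↦ hδ i p.1 p.2
  obtain ⟨haa, hca, had, hcd⟩ := block_relations hδδ hbb
  have hhb' (i : ℤ) := h_comp_b_apply (hhb i)
  exact ⟨reducedDiff_comp_reducedDiff haa hca had hcd hhb', proj d h, incl c h, totalHomotopy h,
    reducedHomotopy c d h, proj_comp_totalDiff had hcd hhb', totalDiff_comp_incl hca hcd hhb',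
    incl_comp_proj_sub_id hcd hhb', proj_comp_incl_sub_id hca had hcd hhb'⟩
end

section
/- Let R be a ring and let A and B be R-modules. Let a : A → A, b : B → B, c : A → B, d : B → A, and h : B → B be R-linear maps satisfying c ∘ d = 0, a ∘ a + d ∘ c = 0, a ∘ d + d ∘ b = 0, c ∘ a + b ∘ c = 0, and h ∘ b + b ∘ h = -id_B. Then the map a + d ∘ h ∘ c : A → A squares to zero: (a + d ∘ h ∘ c) ∘ (a + d ∘ h ∘ c) = 0. -/
/-- Under the Gaussian elimination hypotheses, `a + d ∘ h ∘ c` squares to zero. -/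
theorem gaussian_elimination_reduced_differential_sq_zero
    {R : Type*} [Ring R] {A B : Type*} [AddCommGroup A] [AddCommGroup B]
    [Module R A] [Module R B]
    (a : A →ₗ[R] A) (b : B →ₗ[R] B) (c : A →ₗ[R] B) (d : B →ₗ[R] A) (h : B →ₗ[R] B)
    (hcd : c ∘ₗ d = 0) (haa : a ∘ₗ a + d ∘ₗ c = 0) (had : a ∘ₗ d + d ∘ₗ b = 0)
    (hca : c ∘ₗ a + b ∘ₗ c = 0) (hhb : h ∘ₗ b + b ∘ₗ h = -LinearMap.id) :
    (a + d ∘ₗ h ∘ₗ c) ∘ₗ (a + d ∘ₗ h ∘ₗ c) = 0 := by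
  ext x
  have e1 : ∀ y, c (d y) = 0 := fun y => congrFun (congrArg DFunLike.coe hcd) y
  have e2 : a (a x) = -d (c x) :=
    eq_neg_of_add_eq_zero_left (congrFun (congrArg DFunLike.coe haa) x)
  have e3 : a (d (h (c x))) = -d (b (h (c x))) :=
    eq_neg_of_add_eq_zero_left (congrFun (congrArg DFunLike.coe had) (h (c x)))
  have e4 : c (a x) = -b (c x) :=
    eq_neg_of_add_eq_zero_left (congrFun (congrArg DFunLike.coe hca) x)
  have e5 : h (b (c x)) + b (h (c x)) = -(c x) := by
    have := congrFun (congrArg DFunLike.coe hhb) (c x)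
    simpa using this
  have e6 : d (h (b (c x))) + d (b (h (c x))) = -d (c x) := by
    rw [← map_add, e5, map_neg]
  simp only [LinearMap.comp_apply, LinearMap.add_apply, LinearMap.zero_apply, map_add,
    e1, map_zero, add_zero, e2, e3, e4, map_neg]
  rw [← e6]
  abel
end

section
/- Let R be a ring and let A and B be R-modules. Let a : A → A, b : B → B, c : A → B, d : B → A, and h : B → B be R-linear maps satisfying c ∘ d = 0, a ∘ a + d ∘ c = 0, a ∘ d + d ∘ b = 0, c ∘ a + b ∘ c = 0, and h ∘ b + b ∘ h = -id_B. Define δ : A × B → A × B by δ(x, y) = (a x + d y, c x + b y) and f : A × B → A by f(x, y) = x + d(h(y)). Then f is a chain map: f ∘ δ = (a + d ∘ h ∘ c) ∘ f. -/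
/-- Under the Gaussian elimination hypotheses, `f(x,y) = x + d (h y)` is a chain map:
`f ∘ δ = (a + d ∘ h ∘ c) ∘ f`. -/
theorem gaussian_elimination_f_chain_map
    {R : Type*} [Ring R] {A B : Type*} [AddCommGroup A] [AddCommGroup B]
    [Module R A] [Module R B]
    (a : A →ₗ[R] A) (b : B →ₗ[R] B) (c : A →ₗ[R] B) (d : B →ₗ[R] A) (h : B →ₗ[R] B)
    (hcd : c ∘ₗ d = 0) (haa : a ∘ₗ a + d ∘ₗ c = 0) (had : a ∘ₗ d + d ∘ₗ b = 0)
    (hca : c ∘ₗ a + b ∘ₗ c = 0) (hhb : h ∘ₗ b + b ∘ₗ h = -LinearMap.id)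
    (δ : A × B →ₗ[R] A × B)
    (hδ : ∀ (x : A) (y : B), δ (x, y) = (a x + d y, c x + b y))
    (f : A × B →ₗ[R] A)
    (hf : ∀ (x : A) (y : B), f (x, y) = x + d (h y)) :
    f ∘ₗ δ = (a + d ∘ₗ h ∘ₗ c) ∘ₗ f := by
  apply LinearMap.ext
  rintro ⟨x, y⟩
  have h1 := LinearMap.congr_fun hcd (h y)
  have h2 := LinearMap.congr_fun had (h y)
  have h3 := LinearMap.congr_fun hhb y
  simp only [LinearMap.comp_apply, LinearMap.add_apply, LinearMap.zero_apply,
    LinearMap.neg_apply, LinearMap.id_apply] at h1 h2 h3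
  have e1 : a (d (h y)) = -d (b (h y)) := eq_neg_of_add_eq_zero_left h2
  have e2 : h (b y) = -y - b (h y) := by rw [← h3]; abel
  simp only [LinearMap.comp_apply, hδ, hf, LinearMap.add_apply, map_add, h1, map_zero,
    e1, e2, map_sub, map_neg]
  abel
end

section
/- Let R be a ring and let A and B be R-modules. Let a : A → A, b : B → B, c : A → B, d : B → A, and h : B → B be R-linear maps satisfying c ∘ d = 0, a ∘ a + d ∘ c = 0, a ∘ d + d ∘ b = 0, c ∘ a + b ∘ c = 0, and h ∘ b + b ∘ h = -id_B. Define δ : A × B → A × B by δ(x, y) = (a x + d y, c x + b y) and g : A → A × B by g(x) = (x, h(c(x))). Then g is a chain map: δ ∘ g = g ∘ (a + d ∘ h ∘ c). -/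
/-- Under the Gaussian elimination hypotheses, `g(x) = (x, h (c x))` is a chain map:
`δ ∘ g = g ∘ (a + d ∘ h ∘ c)`. -/
theorem gaussian_elimination_g_chain_map
    {R : Type*} [Ring R] {A B : Type*} [AddCommGroup A] [AddCommGroup B]
    [Module R A] [Module R B]
    (a : A →ₗ[R] A) (b : B →ₗ[R] B) (c : A →ₗ[R] B) (d : B →ₗ[R] A) (h : B →ₗ[R] B)
    (hcd : c ∘ₗ d = 0) (haa : a ∘ₗ a + d ∘ₗ c = 0) (had : a ∘ₗ d + d ∘ₗ b = 0)
    (hca : c ∘ₗ a + b ∘ₗ c = 0) (hhb : h ∘ₗ b + b ∘ₗ h = -LinearMap.id)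
    (δ : A × B →ₗ[R] A × B)
    (hδ : ∀ (x : A) (y : B), δ (x, y) = (a x + d y, c x + b y))
    (g : A →ₗ[R] A × B)
    (hg : ∀ (x : A), g x = (x, h (c x))) :
    δ ∘ₗ g = g ∘ₗ (a + d ∘ₗ h ∘ₗ c) := by
  apply LinearMap.ext; intro x
  have hcd' := LinearMap.congr_fun hcd (h (c x))
  have hca' := LinearMap.congr_fun hca x
  have hhb' := LinearMap.congr_fun hhb (c x)
  simp only [LinearMap.comp_apply, LinearMap.add_apply, LinearMap.zero_apply,
    LinearMap.neg_apply, LinearMap.id_apply, LinearMap.zero_apply] at *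
  rw [hg, hδ, hg]
  refine Prod.ext rfl ?_
  simp only []
  simp only [map_add, hcd', map_zero, add_zero]
  have : h (c (a x)) = h (-(b (c x))) := by rw [eq_neg_of_add_eq_zero_left hca']
  rw [this, map_neg, eq_sub_of_add_eq hhb']
  abel
end

section
/- Let R be a ring and let A and B be R-modules. Let a : A → A, b : B → B, c : A → B, d : B → A, and h : B → B be R-linear maps satisfying c ∘ d = 0, a ∘ a + d ∘ c = 0, a ∘ d + d ∘ b = 0, c ∘ a + b ∘ c = 0, and h ∘ b + b ∘ h = -id_B. Define f : A × B → A by f(x, y) = x + d(h(y)), g : A → A × B by g(x) = (x, h(c(x))), and H' : A → A by H' = d ∘ h ∘ h ∘ h ∘ c. Then f ∘ g - id_A = H' ∘ (a + d ∘ h ∘ c) + (a + d ∘ h ∘ c) ∘ H'. -/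
/-- Under the Gaussian elimination hypotheses, with `f(x,y) = x + d (h y)`,
`g(x) = (x, h (c x))` and `H' = d ∘ h ∘ h ∘ h ∘ c`, one has
`f ∘ g - id = H' ∘ (a + d ∘ h ∘ c) + (a + d ∘ h ∘ c) ∘ H'`. -/
theorem gaussian_elimination_fg_homotopy
    {R : Type*} [Ring R] {A B : Type*} [AddCommGroup A] [AddCommGroup B]
    [Module R A] [Module R B]
    (a : A →ₗ[R] A) (b : B →ₗ[R] B) (c : A →ₗ[R] B) (d : B →ₗ[R] A) (h : B →ₗ[R] B)
    (hcd : c ∘ₗ d = 0) (haa : a ∘ₗ a + d ∘ₗ c = 0) (had : a ∘ₗ d + d ∘ₗ b = 0)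
    (hca : c ∘ₗ a + b ∘ₗ c = 0) (hhb : h ∘ₗ b + b ∘ₗ h = -LinearMap.id)
    (f : A × B →ₗ[R] A)
    (hf : ∀ (x : A) (y : B), f (x, y) = x + d (h y))
    (g : A →ₗ[R] A × B)
    (hg : ∀ (x : A), g x = (x, h (c x)))
    (H' : A →ₗ[R] A)
    (hH' : H' = d ∘ₗ h ∘ₗ h ∘ₗ h ∘ₗ c) :
    f ∘ₗ g - LinearMap.id = H' ∘ₗ (a + d ∘ₗ h ∘ₗ c) + (a + d ∘ₗ h ∘ₗ c) ∘ₗ H' := by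
  have hcd' : ∀ y : B, c (d y) = 0 := fun y => congrFun (congrArg DFunLike.coe hcd) y
  have had' : ∀ y : B, a (d y) = -d (b y) := by
    intro y
    have := congrFun (congrArg DFunLike.coe had) y
    simp only [LinearMap.add_apply, LinearMap.comp_apply, LinearMap.zero_apply] at this
    exact eq_neg_of_add_eq_zero_left this
  have hca' : ∀ x : A, c (a x) = -b (c x) := by
    intro x
    have := congrFun (congrArg DFunLike.coe hca) x
    simp only [LinearMap.add_apply, LinearMap.comp_apply, LinearMap.zero_apply] at this
    exact eq_neg_of_add_eq_zero_left this
  have hhb' : ∀ y : B, h (b y) = -y - b (h y) := by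
    intro y
    have := congrFun (congrArg DFunLike.coe hhb) y
    simp only [LinearMap.add_apply, LinearMap.comp_apply, LinearMap.neg_apply,
      LinearMap.id_apply] at this
    exact eq_sub_of_add_eq this
  have h2b : ∀ y : B, h (h (b y)) = b (h (h y)) := by
    intro y
    rw [hhb' y, map_sub, map_neg, hhb' (h y)]
    abel
  have h3b : ∀ y : B, h (h (h (b y))) = -h (h y) - b (h (h (h y))) := by
    intro y
    rw [h2b y, hhb' (h (h y))]
  ext x
  simp only [LinearMap.sub_apply, LinearMap.comp_apply, LinearMap.add_apply,
    LinearMap.id_apply, hg, hf, hH', map_add, hca', had', hcd', map_zero, map_neg, map_sub, h3b]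
  abel
end
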